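/- arXiv:1804.10086 — 3 statements merged into one kernel-verified Lean document; each statement's English description precedes it below -/
import Mathlib

section
/- Let k ≥ 1 be an integer, H₁, H₂ > 1/2, λ₁, λ₂ > 0, let c₁, c₂ > 0 be scale factors, and let s, t > 0. Write h_{t,s}^{λ₁,λ₂} for the kernel with tempering parameters (λ₁,λ₂). Then for every ((x₁,y₁),…,(x_k,y_k)) ∈ (ℝ²)^k one has h_{c₁t, c₂s}^{λ₁,λ₂}((c₁x₁, c₂y₁),…,(c₁x_k, c₂y_k)) = c₁^{H₁−k/2} c₂^{H₂−k/2} · h_{t,s}^{c₁λ₁, c₂λ₂}((x₁,y₁),…,(x_k,y_k)). -/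
open MeasureTheory

/-- The tempered power kernel: `x ^ p * exp (-(lam * x))` for `x > 0`, and `0` otherwise
(so `x₊ ^ p` is interpreted as `0` when `x ≤ 0`). -/
noncomputable def tk (p lam x : ℝ) : ℝ := if 0 < x then x ^ p * Real.exp (-(lam * x)) else 0

/-- The kernel of the two-parameter tempered Hermite field of order `k`, with tempering
parameters `(λ₁, λ₂)`: the first time argument (paired with the `x`-variables, `H₁`, `λ₁`)
is written first. -/
noncomputable def hkernel (k : ℕ) (H1 H2 l1 l2 t s : ℝ) (x y : Fin k → ℝ) : ℝ :=
  ∫ a in Set.Ioc (0:ℝ) t, ∫ b in Set.Ioc (0:ℝ) s,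
    ∏ j, tk (-(1/2 + (1 - H1)/(k:ℝ))) l1 (a - x j) * tk (-(1/2 + (1 - H2)/(k:ℝ))) l2 (b - y j)

lemma tk_scale (p l c u : ℝ) (hc : 0 < c) : tk p l (c * u) = c ^ p * tk p (c * l) u := by
  unfold tk
  rcases lt_or_ge 0 u with h | h
  · rw [if_pos (mul_pos hc h), if_pos h, Real.mul_rpow hc.le h.le]
    have : l * (c * u) = c * l * u := by ring
    rw [this]; ring
  · rw [if_neg (by nlinarith), if_neg (not_lt.mpr h), mul_zero]

lemma scale_setIntegral (f : ℝ → ℝ) (c T : ℝ) (hc : 0 < c) :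
    ∫ a in Set.Ioc (0:ℝ) (c * T), f a = c * ∫ a in Set.Ioc (0:ℝ) T, f (c * a) := by
  have h := MeasureTheory.Measure.setIntegral_comp_smul_of_pos (volume : Measure ℝ) f
    (Set.Ioc (0:ℝ) T) hc
  simp only [smul_eq_mul, Module.finrank_self, pow_one, smul_eq_mul] at h
  rw [LinearOrderedField.smul_Ioc hc, mul_zero] at h
  rw [h, ← mul_assoc, mul_inv_cancel₀ hc.ne', one_mul]

/-- the scaling identity for the kernel:
`h^{λ₁,λ₂}_{c₁t, c₂s}((c₁x_j, c₂y_j)_j) = c₁^{H₁−k/2} c₂^{H₂−k/2} h^{c₁λ₁,c₂λ₂}_{t,s}((x_j,y_j)_j)`. -/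
theorem kernel_scaling (k : ℕ) (hk : 1 ≤ k) (H1 H2 l1 l2 : ℝ)
    (hH1 : 1/2 < H1) (hH2 : 1/2 < H2) (hl1 : 0 < l1) (hl2 : 0 < l2)
    (c1 c2 : ℝ) (hc1 : 0 < c1) (hc2 : 0 < c2) (t s : ℝ) (ht : 0 < t) (hs : 0 < s)
    (x y : Fin k → ℝ) :
    hkernel k H1 H2 l1 l2 (c1 * t) (c2 * s) (fun j => c1 * x j) (fun j => c2 * y j)
      = c1 ^ (H1 - (k:ℝ)/2) * c2 ^ (H2 - (k:ℝ)/2) *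
          hkernel k H1 H2 (c1 * l1) (c2 * l2) t s x y := by
  have hkR : (0:ℝ) < (k:ℝ) := by exact_mod_cast hk
  set p1 : ℝ := -(1/2 + (1 - H1)/(k:ℝ)) with hp1
  set p2 : ℝ := -(1/2 + (1 - H2)/(k:ℝ)) with hp2
  unfold hkernel
  rw [scale_setIntegral _ c1 t hc1]
  have inner : ∀ a : ℝ,
      (∫ b in Set.Ioc (0:ℝ) (c2 * s),
        ∏ j, tk p1 l1 (c1 * a - c1 * x j) * tk p2 l2 (b - c2 * y j))
      = c2 * (c1 ^ p1 * c2 ^ p2) ^ k *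
        ∫ b in Set.Ioc (0:ℝ) s,
          ∏ j, tk p1 (c1 * l1) (a - x j) * tk p2 (c2 * l2) (b - y j) := by
    intro a
    rw [scale_setIntegral _ c2 s hc2]
    have : ∀ b : ℝ,
        (∏ j, tk p1 l1 (c1 * a - c1 * x j) * tk p2 l2 (c2 * b - c2 * y j))
        = (c1 ^ p1 * c2 ^ p2) ^ k *
          ∏ j, tk p1 (c1 * l1) (a - x j) * tk p2 (c2 * l2) (b - y j) := by
      intro b
      rw [show (c1 ^ p1 * c2 ^ p2) ^ k = ∏ _j : Fin k, (c1 ^ p1 * c2 ^ p2) by simp,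
        ← Finset.prod_mul_distrib]
      refine Finset.prod_congr rfl fun j _ => ?_
      have h1 : c1 * a - c1 * x j = c1 * (a - x j) := by ring
      have h2 : c2 * b - c2 * y j = c2 * (b - y j) := by ring
      rw [h1, h2, tk_scale _ _ _ _ hc1, tk_scale _ _ _ _ hc2]
      ring
    simp_rw [this, integral_const_mul]
    ring
  simp_rw [← hp1, ← hp2, inner, integral_const_mul]
  have key : c1 * (c2 * (c1 ^ p1 * c2 ^ p2) ^ k)
      = c1 ^ (H1 - (k:ℝ)/2) * c2 ^ (H2 - (k:ℝ)/2) := by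
    rw [mul_pow, ← Real.rpow_natCast (c1 ^ p1), ← Real.rpow_natCast (c2 ^ p2),
      ← Real.rpow_mul hc1.le, ← Real.rpow_mul hc2.le]
    have e1 : H1 - (k:ℝ)/2 = 1 + p1 * (k:ℝ) := by
      rw [hp1]; field_simp; ring
    have e2 : H2 - (k:ℝ)/2 = 1 + p2 * (k:ℝ) := by
      rw [hp2]; field_simp; ring
    rw [e1, e2, Real.rpow_add hc1, Real.rpow_add hc2, Real.rpow_one, Real.rpow_one]
    ring
  rw [← mul_assoc, key, mul_assoc]
end

section
/- Let k ≥ 1 be an integer, λ₁, λ₂ > 0 and H₁, H₂ > 1/2 with H₁ ≠ 1 and H₂ ≠ 1. Then there exists a constant C > 0 (depending only on k, H₁, H₂, λ₁, λ₂) such that for all s, t > 0, ∫_{(ℝ²)^k} h_{s,t}((x₁,y₁),…,(x_k,y_k))² dx₁dy₁…dx_k dy_k ≤ C · t^{min(2H₁,2)} · s^{min(2H₂,2)}. -/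
open MeasureTheory

/-!
The kernel factorises into a function of `(x, a)` times a function of `(y, b)`, so the integral
of its square is a product of two one-parameter moments. Expanding the square, such a moment is
`∫₀ᵗ∫₀ᵗ K(a - b)^k da db`, where `K(u) = ∫ F(u + w) F(w) dw` is the autocorrelation of the tempered
power `F(v) = v₊^p e^{-λv}`, `p = -(1/2 + (1-H)/k)`. For `H < 1` we drop the exponential and get
`K(u) ≤ D |u|^{2p+1} = D |u|^{(2H-2)/k}`; for `H > 1` we have `F ∈ L²` and Cauchy–Schwarz gives
`K ≤ ‖F‖₂²`. In both cases `K(a - b)^k ≤ D^k |a - b|^{min(2H,2) - 2}`, whose double integral over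
`(0, t]²` is `O(t^{min(2H,2)})`.
-/

open Set
open scoped ENNReal

section TemperedPower

variable {p l x : ℝ}

lemma tk_nonneg (p l x : ℝ) : 0 ≤ tk p l x := by
  unfold tk; split
  · exact mul_nonneg (Real.rpow_nonneg (le_of_lt ‹_›) _) (Real.exp_nonneg _)
  · exact le_rfl

lemma measurable_tk (p l : ℝ) : Measurable (tk p l) :=
  Measurable.ite measurableSet_Ioi
    ((measurable_id.pow_const p).mul ((measurable_const.mul measurable_id).neg.exp))
    measurable_const

lemma tk_of_nonpos (hx : x ≤ 0) : tk p l x = 0 := if_neg hx.not_gt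

lemma tk_le_rpow (hl : 0 ≤ l) (hx : 0 < x) : tk p l x ≤ x ^ p := by
  rw [tk, if_pos hx]
  exact mul_le_of_le_one_right (Real.rpow_nonneg hx.le _)
    (Real.exp_le_one_iff.mpr (neg_nonpos.mpr (mul_nonneg hl hx.le)))

lemma tk_sq (p l x : ℝ) : tk p l x ^ 2 = tk (2 * p) (2 * l) x := by
  by_cases hx : 0 < x
  · rw [tk, tk, if_pos hx, if_pos hx, mul_pow, ← Real.rpow_mul_natCast hx.le, ← Real.exp_nat_mul]
    congr 2 <;> push_cast <;> ring
  · simp [tk, hx]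

lemma lintegral_ofReal_tk (hp : -1 < p) (hl : 0 < l) :
    ∫⁻ x, ENNReal.ofReal (tk p l x) = ENNReal.ofReal ((1 / l) ^ (p + 1) * Real.Gamma (p + 1)) := by
  have hind : (fun x => ENNReal.ofReal (tk p l x))
      = (Ioi 0).indicator fun x => ENNReal.ofReal (x ^ p * Real.exp (-(l * x))) := by
    ext x
    by_cases hx : 0 < x <;> simp [tk, hx]
  have hint : IntegrableOn (fun x : ℝ => x ^ p * Real.exp (-(l * x))) (Ioi 0) := by
    simpa [Real.rpow_one] using integrableOn_rpow_mul_exp_neg_mul_rpow hp one_pos hl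
  rw [hind, lintegral_indicator measurableSet_Ioi, ← ofReal_integral_eq_lintegral_ofReal hint
    ((ae_restrict_mem measurableSet_Ioi).mono fun x hx =>
      mul_nonneg (Real.rpow_nonneg (le_of_lt hx) _) (Real.exp_nonneg _)),
    ← Real.integral_rpow_mul_exp_neg_mul_Ioi (by linarith) hl, add_sub_cancel_right]

end TemperedPower

section PowerIntegrals

variable {r c : ℝ}

lemma setLIntegral_Ioc_rpow (hr : -1 < r) (hc : 0 ≤ c) :
    ∫⁻ u in Ioc 0 c, ENNReal.ofReal (u ^ r) = ENNReal.ofReal (c ^ (r + 1) / (r + 1)) := by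
  have hint : IntegrableOn (fun u : ℝ => u ^ r) (Ioc 0 c) := by
    simpa [intervalIntegrable_iff, uIoc_of_le hc] using
      intervalIntegral.intervalIntegrable_rpow' (a := 0) (b := c) hr
  rw [← ofReal_integral_eq_lintegral_ofReal hint
    ((ae_restrict_mem measurableSet_Ioc).mono fun u hu => Real.rpow_nonneg hu.1.le _),
    ← intervalIntegral.integral_of_le hc, integral_rpow (Or.inl hr),
    Real.zero_rpow (by linarith), sub_zero]

lemma setLIntegral_Ioi_rpow (hr : r < -1) (hc : 0 < c) :
    ∫⁻ u in Ioi c, ENNReal.ofReal (u ^ r) = ENNReal.ofReal (-c ^ (r + 1) / (r + 1)) := by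
  rw [← ofReal_integral_eq_lintegral_ofReal (integrableOn_Ioi_rpow_of_lt hr hc)
    ((ae_restrict_mem measurableSet_Ioi).mono fun u hu => Real.rpow_nonneg (hc.trans hu).le _),
    integral_Ioi_rpow_of_lt hr hc]

lemma setLIntegral_Ioc_comp_abs_sub_le (g : ℝ → ℝ≥0∞) {a t : ℝ} (ha : a ∈ Icc 0 t) :
    ∫⁻ b in Ioc 0 t, g |a - b| ≤ 2 * ∫⁻ w in Ioc 0 t, g w := by
  have left : ∫⁻ b in Ioc 0 a, g |a - b| ≤ ∫⁻ w in Ioc 0 t, g w := by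
    have hpre : (fun b => a - b) ⁻¹' Ico 0 a = Ioc 0 a := by
      ext b; simp only [mem_preimage, mem_Ico, mem_Ioc]
      constructor <;> intro h <;> constructor <;> linarith [h.1, h.2]
    calc ∫⁻ b in Ioc 0 a, g |a - b| = ∫⁻ b in Ioc 0 a, g (a - b) :=
          setLIntegral_congr_fun measurableSet_Ioc fun b hb => by
            rw [abs_of_nonneg (sub_nonneg.mpr hb.2)]
      _ = ∫⁻ w in Ico 0 a, g w := by
          rw [← hpre, (Measure.measurePreserving_sub_left volume a).setLIntegral_comp_preimage_emb
            (MeasurableEquiv.subLeft a).measurableEmbedding]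
      _ ≤ ∫⁻ w in Ioc 0 t, g w := by
          rw [setLIntegral_congr Ico_ae_eq_Ioc]
          exact lintegral_mono_set (Ioc_subset_Ioc_right ha.2)
  have right : ∫⁻ b in Ioc a t, g |a - b| ≤ ∫⁻ w in Ioc 0 t, g w := by
    have hpre : (fun b => b - a) ⁻¹' Ioc 0 (t - a) = Ioc a t := by
      ext b; simp only [mem_preimage, mem_Ioc]
      constructor <;> intro h <;> constructor <;> linarith [h.1, h.2]
    calc ∫⁻ b in Ioc a t, g |a - b| = ∫⁻ b in Ioc a t, g (b - a) :=
          setLIntegral_congr_fun measurableSet_Ioc fun b hb => by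
            rw [abs_sub_comm, abs_of_nonneg (sub_nonneg.mpr hb.1.le)]
      _ = ∫⁻ w in Ioc 0 (t - a), g w := by
          rw [← hpre, (measurePreserving_sub_right volume a).setLIntegral_comp_preimage_emb
            (MeasurableEquiv.subRight a).measurableEmbedding]
      _ ≤ ∫⁻ w in Ioc 0 t, g w := lintegral_mono_set (Ioc_subset_Ioc_right (by linarith [ha.1]))
  calc ∫⁻ b in Ioc 0 t, g |a - b|
      ≤ (∫⁻ b in Ioc 0 a, g |a - b|) + ∫⁻ b in Ioc a t, g |a - b| := by
        rw [← Ioc_union_Ioc_eq_Ioc ha.1 ha.2]; exact lintegral_union_le _ _ _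
    _ ≤ 2 * ∫⁻ w in Ioc 0 t, g w := by rw [two_mul]; exact add_le_add left right

lemma setLIntegral_Ioc_setLIntegral_Ioc_abs_sub_rpow_le {r t : ℝ} (hr : -1 < r) (ht : 0 ≤ t) :
    ∫⁻ a in Ioc 0 t, ∫⁻ b in Ioc 0 t, ENNReal.ofReal (|a - b| ^ r)
      ≤ ENNReal.ofReal (2 * t ^ (r + 2) / (r + 1)) := by
  have hr1 : 0 < r + 1 := by linarith
  calc ∫⁻ a in Ioc 0 t, ∫⁻ b in Ioc 0 t, ENNReal.ofReal (|a - b| ^ r)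
      ≤ ∫⁻ _ in Ioc 0 t, 2 * ENNReal.ofReal (t ^ (r + 1) / (r + 1)) := by
        refine setLIntegral_mono' measurableSet_Ioc fun a ha => ?_
        rw [← setLIntegral_Ioc_rpow hr ht]
        exact setLIntegral_Ioc_comp_abs_sub_le (fun w => ENNReal.ofReal (w ^ r))
          (Ioc_subset_Icc_self ha)
    _ = ENNReal.ofReal (2 * t ^ (r + 2) / (r + 1)) := by
        rw [setLIntegral_const, Real.volume_Ioc, sub_zero, ← ENNReal.ofReal_ofNat 2,
          ← ENNReal.ofReal_mul zero_le_two, ← ENNReal.ofReal_mul (by positivity)]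
        congr 1
        rw [show r + 2 = (r + 1) + 1 by ring, Real.rpow_add_one' (y := r + 1) ht (by linarith)]
        ring

end PowerIntegrals

section Correlation

lemma lintegral_comp_sub_mul_comp_sub (F : ℝ → ℝ≥0∞) (a b : ℝ) :
    ∫⁻ x, F (a - x) * F (b - x) = ∫⁻ w, F (|a - b| + w) * F w := by
  rcases le_total b a with hba | hab
  · rw [← lintegral_sub_left_eq_self _ b, abs_of_nonneg (sub_nonneg.mpr hba)]
    simp only [sub_sub_cancel, sub_sub_eq_add_sub, add_sub_right_comm]
  · rw [← lintegral_sub_left_eq_self _ a, abs_sub_comm, abs_of_nonneg (sub_nonneg.mpr hab)]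
    simp only [sub_sub_cancel, sub_sub_eq_add_sub, add_sub_right_comm, mul_comm]

lemma lintegral_comp_sub_mul_comp_sub_le (F : ℝ → ℝ≥0∞) (hF : Measurable F) (a b : ℝ) :
    ∫⁻ x, F (a - x) * F (b - x) ≤ ∫⁻ x, F x ^ 2 := by
  have hsq : ∀ c, ∫⁻ x, F (c - x) ^ (2 : ℝ) = ∫⁻ x, F x ^ 2 := fun c => by
    simpa only [ENNReal.rpow_two] using lintegral_sub_left_eq_self (fun x => F x ^ 2) c
  calc ∫⁻ x, F (a - x) * F (b - x)
      ≤ (∫⁻ x, F (a - x) ^ (2 : ℝ)) ^ (1 / 2 : ℝ) * (∫⁻ x, F (b - x) ^ (2 : ℝ)) ^ (1 / 2 : ℝ) :=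
        ENNReal.lintegral_mul_le_Lp_mul_Lq _ Real.HolderConjugate.two_two
          (hF.comp (measurable_const.sub measurable_id)).aemeasurable
          (hF.comp (measurable_const.sub measurable_id)).aemeasurable
    _ = ∫⁻ x, F x ^ 2 := by
        rw [hsq, hsq, ← ENNReal.mul_rpow_of_nonneg _ _ (by norm_num), ← sq,
          ← ENNReal.rpow_natCast, ← ENNReal.rpow_mul]
        norm_num

lemma setLIntegral_Ioi_add_rpow_mul_rpow_le {p u : ℝ} (hp : -1 < p) (hp' : 2 * p + 1 < 0)
    (hu : 0 < u) :
    ∫⁻ w in Ioi 0, ENNReal.ofReal ((u + w) ^ p * w ^ p)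
      ≤ ENNReal.ofReal ((1 / (p + 1) - 1 / (2 * p + 1)) * u ^ (2 * p + 1)) := by
  have hp0 : p ≤ 0 := by linarith
  have near : ∫⁻ w in Ioc 0 u, ENNReal.ofReal ((u + w) ^ p * w ^ p)
      ≤ ENNReal.ofReal (u ^ (2 * p + 1) / (p + 1)) := by
    calc ∫⁻ w in Ioc 0 u, ENNReal.ofReal ((u + w) ^ p * w ^ p)
        ≤ ∫⁻ w in Ioc 0 u, ENNReal.ofReal (u ^ p) * ENNReal.ofReal (w ^ p) := by
          refine setLIntegral_mono' measurableSet_Ioc fun w hw => ?_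
          rw [← ENNReal.ofReal_mul (by positivity)]
          exact ENNReal.ofReal_le_ofReal (mul_le_mul_of_nonneg_right
            (Real.rpow_le_rpow_of_nonpos hu (by linarith [hw.1]) hp0) (Real.rpow_nonneg hw.1.le _))
      _ = ENNReal.ofReal (u ^ (2 * p + 1) / (p + 1)) := by
          rw [lintegral_const_mul' _ _ ENNReal.ofReal_ne_top, setLIntegral_Ioc_rpow hp hu.le,
            ← ENNReal.ofReal_mul (by positivity), ← mul_div_assoc, ← Real.rpow_add hu]
          ring_nf
  have far : ∫⁻ w in Ioi u, ENNReal.ofReal ((u + w) ^ p * w ^ p)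
      ≤ ENNReal.ofReal (-u ^ (2 * p + 1) / (2 * p + 1)) := by
    calc ∫⁻ w in Ioi u, ENNReal.ofReal ((u + w) ^ p * w ^ p)
        ≤ ∫⁻ w in Ioi u, ENNReal.ofReal (w ^ (2 * p)) := by
          refine setLIntegral_mono' measurableSet_Ioi fun w hw => ?_
          have hw0 : 0 < w := hu.trans hw
          rw [two_mul, Real.rpow_add hw0]
          exact ENNReal.ofReal_le_ofReal (mul_le_mul_of_nonneg_right
            (Real.rpow_le_rpow_of_nonpos hw0 (by linarith) hp0) (Real.rpow_nonneg hw0.le _))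
      _ = ENNReal.ofReal (-u ^ (2 * p + 1) / (2 * p + 1)) := setLIntegral_Ioi_rpow (by linarith) hu
  calc ∫⁻ w in Ioi 0, ENNReal.ofReal ((u + w) ^ p * w ^ p)
      ≤ (∫⁻ w in Ioc 0 u, ENNReal.ofReal ((u + w) ^ p * w ^ p))
        + ∫⁻ w in Ioi u, ENNReal.ofReal ((u + w) ^ p * w ^ p) := by
        rw [← Ioc_union_Ioi_eq_Ioi hu.le]; exact lintegral_union_le _ _ _
    _ ≤ ENNReal.ofReal (u ^ (2 * p + 1) / (p + 1))
          + ENNReal.ofReal (-u ^ (2 * p + 1) / (2 * p + 1)) :=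
        add_le_add near far
    _ = ENNReal.ofReal ((1 / (p + 1) - 1 / (2 * p + 1)) * u ^ (2 * p + 1)) := by
        rw [← ENNReal.ofReal_add (div_nonneg (by positivity) (by linarith))
          (div_nonneg_of_nonpos (neg_nonpos.mpr (by positivity)) hp'.le)]
        ring_nf

lemma lintegral_tk_add_mul_tk_le {p l u : ℝ} (hl : 0 ≤ l) (hu : 0 ≤ u) :
    ∫⁻ w, ENNReal.ofReal (tk p l (u + w)) * ENNReal.ofReal (tk p l w)
      ≤ ∫⁻ w in Ioi 0, ENNReal.ofReal ((u + w) ^ p * w ^ p) := by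
  rw [← lintegral_indicator measurableSet_Ioi]
  refine lintegral_mono fun w => ?_
  by_cases hw : 0 < w
  · rw [indicator_of_mem (show w ∈ Ioi 0 from hw), ENNReal.ofReal_mul (by positivity)]
    gcongr <;> exact tk_le_rpow hl (by linarith)
  · simp [tk_of_nonpos (not_lt.mp hw)]

end Correlation

section Moments

lemma ofReal_sq_integral_prod_le {α ι : Type*} [MeasurableSpace α] [Fintype ι] {μ : Measure α}
    {g : ι → α → ℝ} (hg : ∀ j a, 0 ≤ g j a) :
    ENNReal.ofReal ((∫ a, ∏ j, g j a ∂μ) ^ 2) ≤ (∫⁻ a, ∏ j, ENNReal.ofReal (g j a) ∂μ) ^ 2 := by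
  have hprod : ∀ a, 0 ≤ ∏ j, g j a := fun a => Finset.prod_nonneg fun j _ => hg j a
  rw [ENNReal.ofReal_pow (integral_nonneg hprod)]
  gcongr
  calc ENNReal.ofReal (∫ a, ∏ j, g j a ∂μ) = ‖∫ a, ∏ j, g j a ∂μ‖ₑ :=
        (Real.enorm_of_nonneg (integral_nonneg hprod)).symm
    _ ≤ ∫⁻ a, ‖∏ j, g j a‖ₑ ∂μ := enorm_integral_le_lintegral_enorm _
    _ = ∫⁻ a, ∏ j, ENNReal.ofReal (g j a) ∂μ := lintegral_congr fun a => by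
        rw [Real.enorm_of_nonneg (hprod a), ENNReal.ofReal_prod_of_nonneg fun j _ => hg j a]

lemma lintegral_fin_prod_eq_prod {E : Type*} [MeasurableSpace E] (μ : Measure E) [SigmaFinite μ]
    {n : ℕ} (f : Fin n → E → ℝ≥0∞) (hf : ∀ i, Measurable (f i)) :
    ∫⁻ x, ∏ i, f i (x i) ∂Measure.pi (fun _ => μ) = ∏ i, ∫⁻ x, f i x ∂μ := by
  induction n with
  | zero => simp
  | succ n ih =>
    rw [← ((measurePreserving_piFinSuccAbove (fun _ : Fin (n + 1) => μ) 0).symm).lintegral_comp_emb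
      (MeasurableEquiv.measurableEmbedding _)]
    simp_rw [MeasurableEquiv.piFinSuccAbove_symm_apply, Fin.insertNthEquiv, Equiv.coe_fn_mk,
      Fin.insertNth_zero, Fin.prod_univ_succ, Fin.cons_zero, Fin.cons_succ]
    simp only [cast_eq]
    rw [lintegral_prod_mul (g := fun y : Fin n → E => ∏ i, f i.succ (y i)) (hf 0).aemeasurable
      (Finset.measurable_prod _ fun i _ => (hf i.succ).comp (measurable_pi_apply i)).aemeasurable,
      ih _ fun i => hf i.succ]

variable {F : ℝ → ℝ≥0∞}

lemma measurable_lintegral_prod_comp_sub {ι : Type*} [Fintype ι] (μ : Measure ℝ) [SFinite μ]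
    (hF : Measurable F) : Measurable fun x : ι → ℝ => ∫⁻ a, ∏ j, F (a - x j) ∂μ :=
  Measurable.lintegral_prod_right' (f := fun q : (ι → ℝ) × ℝ => ∏ j, F (q.2 - q.1 j)) (by fun_prop)

lemma lintegral_sq_lintegral_prod_comp_sub (k : ℕ) (μ : Measure ℝ) [SFinite μ] (hF : Measurable F) :
    ∫⁻ x : Fin k → ℝ, (∫⁻ a, ∏ j, F (a - x j) ∂μ) ^ 2
      = ∫⁻ a, ∫⁻ b, (∫⁻ y, F (a - y) * F (b - y)) ^ k ∂μ ∂μ := by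
  calc ∫⁻ x : Fin k → ℝ, (∫⁻ a, ∏ j, F (a - x j) ∂μ) ^ 2
      = ∫⁻ x : Fin k → ℝ, ∫⁻ q, (∏ j, F (q.1 - x j)) * ∏ j, F (q.2 - x j) ∂μ.prod μ := by
        refine lintegral_congr fun x => ?_
        rw [sq, ← lintegral_prod_mul (f := fun a => ∏ j, F (a - x j))
          (g := fun a => ∏ j, F (a - x j)) (by fun_prop) (by fun_prop)]
    _ = ∫⁻ q, (∫⁻ x : Fin k → ℝ, (∏ j, F (q.1 - x j)) * ∏ j, F (q.2 - x j)) ∂μ.prod μ :=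
        lintegral_lintegral_swap (f := fun (x : Fin k → ℝ) (q : ℝ × ℝ) =>
          (∏ j, F (q.1 - x j)) * ∏ j, F (q.2 - x j)) (by fun_prop)
    _ = ∫⁻ q, (∫⁻ y, F (q.1 - y) * F (q.2 - y)) ^ k ∂μ.prod μ := by
        refine lintegral_congr fun q => ?_
        simp_rw [← Finset.prod_mul_distrib]
        rw [volume_pi, lintegral_fin_prod_eq_prod volume (fun _ y => F (q.1 - y) * F (q.2 - y))
          (fun _ => by fun_prop), Finset.prod_const, Finset.card_univ, Fintype.card_fin]
    _ = ∫⁻ a, ∫⁻ b, (∫⁻ y, F (a - y) * F (b - y)) ^ k ∂μ ∂μ :=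
        lintegral_prod _ ((Measurable.lintegral_prod_right'
          (f := fun q : (ℝ × ℝ) × ℝ => F (q.1.1 - q.2) * F (q.1.2 - q.2)) (by fun_prop)).pow_const
          k).aemeasurable

lemma lintegral_sq_setLIntegral_prod_comp_sub_le {k : ℕ} (hF : Measurable F) {D e t : ℝ}
    (hD : 0 ≤ D) (he : -1 < k * e) (ht : 0 ≤ t)
    (hK : ∀ a b, a ≠ b → ∫⁻ y, F (a - y) * F (b - y) ≤ ENNReal.ofReal (D * |a - b| ^ e)) :
    ∫⁻ x : Fin k → ℝ, (∫⁻ a in Ioc 0 t, ∏ j, F (a - x j)) ^ 2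
      ≤ ENNReal.ofReal (D ^ k * (2 * t ^ (k * e + 2) / (k * e + 1))) := by
  rw [lintegral_sq_lintegral_prod_comp_sub k _ hF]
  calc ∫⁻ a in Ioc 0 t, ∫⁻ b in Ioc 0 t, (∫⁻ y, F (a - y) * F (b - y)) ^ k
      ≤ ∫⁻ a in Ioc 0 t, ∫⁻ b in Ioc 0 t,
          ENNReal.ofReal (D ^ k) * ENNReal.ofReal (|a - b| ^ (k * e)) := by
        refine lintegral_mono fun a => lintegral_mono_ae ?_
        filter_upwards [Measure.ae_ne _ a] with b hb
        calc (∫⁻ y, F (a - y) * F (b - y)) ^ k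
            ≤ ENNReal.ofReal (D * |a - b| ^ e) ^ k := pow_le_pow_left' (hK a b hb.symm) k
          _ = ENNReal.ofReal (D ^ k) * ENNReal.ofReal (|a - b| ^ (k * e)) := by
            rw [← ENNReal.ofReal_pow (by positivity), ← ENNReal.ofReal_mul (by positivity), mul_pow,
              mul_comm (k : ℝ), Real.rpow_mul_natCast (abs_nonneg _)]
    _ = ENNReal.ofReal (D ^ k) *
          ∫⁻ a in Ioc 0 t, ∫⁻ b in Ioc 0 t, ENNReal.ofReal (|a - b| ^ (k * e)) := by
        simp_rw [lintegral_const_mul' _ _ ENNReal.ofReal_ne_top]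
    _ ≤ ENNReal.ofReal (D ^ k) * ENNReal.ofReal (2 * t ^ (k * e + 2) / (k * e + 1)) := by
        gcongr; exact setLIntegral_Ioc_setLIntegral_Ioc_abs_sub_rpow_le he ht
    _ = ENNReal.ofReal (D ^ k * (2 * t ^ (k * e + 2) / (k * e + 1))) :=
        (ENNReal.ofReal_mul (by positivity)).symm

end Moments

section TemperedHermiteKernel

variable {k : ℕ} {H l : ℝ}

noncomputable def temperedHermiteKernel (k : ℕ) (H l t : ℝ) (x : Fin k → ℝ) : ℝ≥0∞ :=
  ∫⁻ a in Ioc 0 t, ∏ j, ENNReal.ofReal (tk (-(1 / 2 + (1 - H) / k)) l (a - x j))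

lemma measurable_temperedHermiteKernel (k : ℕ) (H l t : ℝ) :
    Measurable (temperedHermiteKernel k H l t) :=
  measurable_lintegral_prod_comp_sub _ (measurable_tk _ l).ennreal_ofReal

lemma exists_lintegral_tk_mul_tk_le (hk : 1 ≤ k) (hH : 1 / 2 < H) (hH' : H ≠ 1) (hl : 0 < l) :
    ∃ D e : ℝ, 0 < D ∧ k * e + 2 = min (2 * H) 2 ∧ ∀ a b, a ≠ b →
      ∫⁻ y, ENNReal.ofReal (tk (-(1 / 2 + (1 - H) / k)) l (a - y))
          * ENNReal.ofReal (tk (-(1 / 2 + (1 - H) / k)) l (b - y))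
        ≤ ENNReal.ofReal (D * |a - b| ^ e) := by
  set p : ℝ := -(1 / 2 + (1 - H) / k) with hp
  have hk0 : (0 : ℝ) < k := by exact_mod_cast hk
  rcases hH'.lt_or_gt with hH1 | hH1
  · have hp1 : -1 < p := by
      have : (1 - H) / k ≤ 1 - H := div_le_self (by linarith) (by exact_mod_cast hk)
      linarith
    have hp2 : 2 * p + 1 < 0 := by
      have : 0 < (1 - H) / k := div_pos (by linarith) hk0
      linarith
    refine ⟨1 / (p + 1) - 1 / (2 * p + 1), 2 * p + 1, ?_, ?_, fun a b hab => ?_⟩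
    · have : 1 / (2 * p + 1) < 0 := one_div_neg.mpr hp2
      have : 0 < 1 / (p + 1) := one_div_pos.mpr (by linarith)
      linarith
    · rw [min_eq_left (by linarith), hp]
      field_simp
      ring
    · rw [lintegral_comp_sub_mul_comp_sub fun v => ENNReal.ofReal (tk p l v)]
      exact (lintegral_tk_add_mul_tk_le hl.le (abs_nonneg _)).trans
        (setLIntegral_Ioi_add_rpow_mul_rpow_le hp1 hp2 (abs_pos.mpr (sub_ne_zero.mpr hab)))
  · have hp1 : -1 < 2 * p := by
      have : (1 - H) / k < 0 := div_neg_of_neg_of_pos (by linarith) hk0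
      linarith
    refine ⟨(1 / (2 * l)) ^ (2 * p + 1) * Real.Gamma (2 * p + 1), 0,
      by have := Real.Gamma_pos_of_pos (by linarith : 0 < 2 * p + 1); positivity,
      by rw [min_eq_right (by linarith)]; ring, fun a b _ => ?_⟩
    calc ∫⁻ y, ENNReal.ofReal (tk p l (a - y)) * ENNReal.ofReal (tk p l (b - y))
        ≤ ∫⁻ y, ENNReal.ofReal (tk p l y) ^ 2 :=
          lintegral_comp_sub_mul_comp_sub_le _ ((measurable_tk p l).ennreal_ofReal) a b
      _ = ENNReal.ofReal
            ((1 / (2 * l)) ^ (2 * p + 1) * Real.Gamma (2 * p + 1) * |a - b| ^ (0 : ℝ)) := by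
          rw [Real.rpow_zero, mul_one, ← lintegral_ofReal_tk hp1 (by positivity)]
          exact lintegral_congr fun y => by rw [← ENNReal.ofReal_pow (tk_nonneg _ _ _), tk_sq]

lemma exists_lintegral_temperedHermiteKernel_sq_le (hk : 1 ≤ k) (hH : 1 / 2 < H) (hH' : H ≠ 1)
    (hl : 0 < l) :
    ∃ C : ℝ, 0 < C ∧ ∀ t : ℝ, 0 < t →
      ∫⁻ x, temperedHermiteKernel k H l t x ^ 2 ≤ ENNReal.ofReal (C * t ^ min (2 * H) 2) := by
  obtain ⟨D, e, hD, hke, hK⟩ := exists_lintegral_tk_mul_tk_le hk hH hH' hl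
  have he : 0 < k * e + 1 := by
    have : 1 < min (2 * H) 2 := lt_min (by linarith) one_lt_two
    linarith
  refine ⟨D ^ k * 2 / (k * e + 1), by positivity, fun t ht => ?_⟩
  refine (lintegral_sq_setLIntegral_prod_comp_sub_le (measurable_tk _ l).ennreal_ofReal hD.le
    (by linarith) ht.le hK).trans_eq ?_
  rw [← hke]
  ring_nf

lemma hkernel_eq_mul (k : ℕ) (H1 H2 l1 l2 t s : ℝ) (x y : Fin k → ℝ) :
    hkernel k H1 H2 l1 l2 t s x y =
      (∫ a in Ioc 0 t, ∏ j, tk (-(1 / 2 + (1 - H1) / k)) l1 (a - x j))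
        * ∫ b in Ioc 0 s, ∏ j, tk (-(1 / 2 + (1 - H2) / k)) l2 (b - y j) := by
  simp_rw [hkernel, Finset.prod_mul_distrib, integral_const_mul, integral_mul_const]

lemma ofReal_hkernel_sq_le (k : ℕ) (H1 H2 l1 l2 t s : ℝ) (x y : Fin k → ℝ) :
    ENNReal.ofReal (hkernel k H1 H2 l1 l2 t s x y ^ 2)
      ≤ temperedHermiteKernel k H1 l1 t x ^ 2 * temperedHermiteKernel k H2 l2 s y ^ 2 := by
  rw [hkernel_eq_mul, mul_pow, ENNReal.ofReal_mul (sq_nonneg _)]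
  gcongr <;> exact ofReal_sq_integral_prod_le fun j a => tk_nonneg _ _ _

end TemperedHermiteKernel

/-- for `k ≥ 1`, `λ₁, λ₂ > 0` and `H₁, H₂ > 1/2` with `H₁ ≠ 1 ≠ H₂`,
there is a constant `C > 0` such that for all `s, t > 0`,
`∫_{(ℝ²)^k} h_{s,t}² ≤ C · t^{min(2H₁,2)} · s^{min(2H₂,2)}`. -/
theorem kernel_sq_integral_bound (k : ℕ) (hk : 1 ≤ k) (H1 H2 l1 l2 : ℝ)
    (hH1 : 1/2 < H1) (hH2 : 1/2 < H2) (hH1' : H1 ≠ 1) (hH2' : H2 ≠ 1)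
    (hl1 : 0 < l1) (hl2 : 0 < l2) :
    ∃ C : ℝ, 0 < C ∧ ∀ t s : ℝ, 0 < t → 0 < s →
      ∫⁻ p : (Fin k → ℝ) × (Fin k → ℝ),
          ENNReal.ofReal ((hkernel k H1 H2 l1 l2 t s p.1 p.2) ^ 2)
        ≤ ENNReal.ofReal (C * t ^ (min (2 * H1) 2) * s ^ (min (2 * H2) 2)) := by
  obtain ⟨C1, hC1, hB1⟩ := exists_lintegral_temperedHermiteKernel_sq_le hk hH1 hH1' hl1
  obtain ⟨C2, hC2, hB2⟩ := exists_lintegral_temperedHermiteKernel_sq_le hk hH2 hH2' hl2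
  refine ⟨C1 * C2, mul_pos hC1 hC2, fun t s ht hs => ?_⟩
  calc ∫⁻ p : (Fin k → ℝ) × (Fin k → ℝ), ENNReal.ofReal ((hkernel k H1 H2 l1 l2 t s p.1 p.2) ^ 2)
      ≤ ∫⁻ p : (Fin k → ℝ) × (Fin k → ℝ),
          temperedHermiteKernel k H1 l1 t p.1 ^ 2 * temperedHermiteKernel k H2 l2 s p.2 ^ 2 :=
        lintegral_mono fun p => ofReal_hkernel_sq_le k H1 H2 l1 l2 t s p.1 p.2
    _ = (∫⁻ x, temperedHermiteKernel k H1 l1 t x ^ 2)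
          * ∫⁻ y, temperedHermiteKernel k H2 l2 s y ^ 2 := by
        rw [Measure.volume_eq_prod]
        exact lintegral_prod_mul
          ((measurable_temperedHermiteKernel k H1 l1 t).pow_const 2).aemeasurable
          ((measurable_temperedHermiteKernel k H2 l2 s).pow_const 2).aemeasurable
    _ ≤ ENNReal.ofReal (C1 * t ^ min (2 * H1) 2) * ENNReal.ofReal (C2 * s ^ min (2 * H2) 2) :=
        mul_le_mul' (hB1 t ht) (hB2 s hs)
    _ = ENNReal.ofReal (C1 * C2 * t ^ min (2 * H1) 2 * s ^ min (2 * H2) 2) := by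
        rw [← ENNReal.ofReal_mul (by positivity)]
        ring_nf
end

section
/- Let α₁, α₂ > 0 and λ₁, λ₂ > 0, and let f, g ∈ L²(ℝ²). Then the two-parameter tempered fractional integration-by-parts formula holds: ∫_{ℝ²} f(x,y) · 𝕀₊^{α,λ}g(x,y) dx dy = ∫_{ℝ²} 𝕀₋^{α,λ}f(x,y) · g(x,y) dx dy (both sides being absolutely convergent, since 𝕀₊^{α,λ}g and 𝕀₋^{α,λ}f again belong to L²(ℝ²)). -/
open MeasureTheory

/-- The left (positive) two-parameter tempered fractional integral
`𝕀₊^{α,λ}f(t,s) = (Γ(α₁)Γ(α₂))⁻¹ ∫_{ℝ²} (t−u)₊^{α₁−1} e^{−λ₁(t−u)₊} (s−v)₊^{α₂−1}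
e^{−λ₂(s−v)₊} f(u,v) du dv`. -/
noncomputable def Ip (a1 a2 l1 l2 : ℝ) (f : ℝ × ℝ → ℝ) (t s : ℝ) : ℝ :=
  (Real.Gamma a1 * Real.Gamma a2)⁻¹ *
    ∫ u : ℝ × ℝ, tk (a1 - 1) l1 (t - u.1) * tk (a2 - 1) l2 (s - u.2) * f u

/-- The right (negative) two-parameter tempered fractional integral
`𝕀₋^{α,λ}f(t,s) = (Γ(α₁)Γ(α₂))⁻¹ ∫_{ℝ²} (u−t)₊^{α₁−1} e^{−λ₁(u−t)₊} (v−s)₊^{α₂−1}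
e^{−λ₂(v−s)₊} f(u,v) du dv`. -/
noncomputable def Im (a1 a2 l1 l2 : ℝ) (f : ℝ × ℝ → ℝ) (t s : ℝ) : ℝ :=
  (Real.Gamma a1 * Real.Gamma a2)⁻¹ *
    ∫ u : ℝ × ℝ, tk (a1 - 1) l1 (u.1 - t) * tk (a2 - 1) l2 (u.2 - s) * f u


namespace TFIBP

open Real Set ENNReal

variable {K F G : ℝ × ℝ → ℝ≥0∞}

lemma tk_measurable (p lam : ℝ) : Measurable (tk p lam) := by
  unfold tk
  refine Measurable.ite ?_ ?_ measurable_const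
  · exact measurableSet_lt measurable_const measurable_id
  · fun_prop

lemma tk_integrable {p lam : ℝ} (hp : -1 < p) (hl : 0 < lam) :
    Integrable (tk p lam) volume := by
  have h1 : IntegrableOn (fun x : ℝ => x ^ p * Real.exp (-(lam * x))) (Ioi 0) := by
    have h := integrableOn_rpow_mul_exp_neg_mul_rpow hp one_pos hl
    simpa [Real.rpow_one, neg_mul] using h
  have h2 : tk p lam = (Ioi (0:ℝ)).indicator (fun x => x ^ p * Real.exp (-(lam * x))) := by
    funext x
    by_cases hx : 0 < x <;> simp [tk, Set.indicator, Set.mem_Ioi, hx]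
  rw [h2, integrable_indicator_iff measurableSet_Ioi]
  exact h1

lemma lint_CS {α : Type*} [MeasurableSpace α] (μ : Measure α) {F G : α → ℝ≥0∞}
    (hF : AEMeasurable F μ) (hG : AEMeasurable G μ) :
    ∫⁻ a, F a * G a ∂μ
      ≤ (∫⁻ a, F a ^ (2:ℝ) ∂μ) ^ (1/2:ℝ) * (∫⁻ a, G a ^ (2:ℝ) ∂μ) ^ (1/2:ℝ) := by
  have h := ENNReal.lintegral_mul_le_Lp_mul_Lq μ (p := 2) (q := 2)
    (by constructor <;> norm_num) hF hG
  simpa using h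


lemma conv_sq_bound (hK : Measurable K) (hG : Measurable G) :
    ∫⁻ p, (∫⁻ u, K (p - u) * G u) ^ (2:ℝ)
      ≤ ((∫⁻ x, K x) * (∫⁻ x, K x)) * ∫⁻ u, G u ^ (2:ℝ) := by
  have hGsq : Measurable fun u => G u ^ (2:ℝ) := hG.pow_const _
  have hKG2 : Measurable (Function.uncurry fun p u : ℝ × ℝ => K (p - u) * G u ^ (2:ℝ)) :=
    (hK.comp (measurable_fst.sub measurable_snd)).mul (hGsq.comp measurable_snd)
  have hconv2 : Measurable fun p : ℝ × ℝ => ∫⁻ u, K (p - u) * G u ^ (2:ℝ) :=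
    hKG2.lintegral_prod_right
  have step1 : ∀ p : ℝ × ℝ, (∫⁻ u, K (p - u) * G u) ^ (2:ℝ)
      ≤ (∫⁻ x, K x) * ∫⁻ u, K (p - u) * G u ^ (2:ℝ) := by
    intro p
    have hKp : Measurable fun u : ℝ × ℝ => K (p - u) :=
      hK.comp (measurable_const.sub measurable_id)
    have hcs := lint_CS volume (F := fun u => K (p - u) ^ (1/2:ℝ))
      (G := fun u => K (p - u) ^ (1/2:ℝ) * G u)
      (hKp.pow_const _).aemeasurable ((hKp.pow_const _).mul hG).aemeasurable
    have e1 : ∀ u : ℝ × ℝ, K (p - u) ^ (1/2:ℝ) * (K (p - u) ^ (1/2:ℝ) * G u)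
        = K (p - u) * G u := by
      intro u
      rw [← mul_assoc, ← ENNReal.rpow_add_of_nonneg _ _ (by norm_num) (by norm_num)]
      norm_num
    have e2 : ∀ u : ℝ × ℝ, (K (p - u) ^ (1/2:ℝ)) ^ (2:ℝ) = K (p - u) := by
      intro u; rw [← ENNReal.rpow_mul]; norm_num
    have e3 : ∀ u : ℝ × ℝ, (K (p - u) ^ (1/2:ℝ) * G u) ^ (2:ℝ)
        = K (p - u) * G u ^ (2:ℝ) := by
      intro u; rw [ENNReal.mul_rpow_of_nonneg _ _ (by norm_num : (0:ℝ) ≤ 2), e2]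
    rw [lintegral_congr e1, lintegral_congr e2, lintegral_congr e3] at hcs
    have hKint : ∫⁻ u, K (p - u) = ∫⁻ x, K x :=
      (Measure.measurePreserving_sub_left volume p).lintegral_comp hK
    rw [hKint] at hcs
    calc (∫⁻ u, K (p - u) * G u) ^ (2:ℝ)
        ≤ ((∫⁻ x, K x) ^ (1/2:ℝ) * (∫⁻ u, K (p - u) * G u ^ (2:ℝ)) ^ (1/2:ℝ)) ^ (2:ℝ) :=
          ENNReal.rpow_le_rpow hcs (by norm_num)
      _ = (∫⁻ x, K x) * ∫⁻ u, K (p - u) * G u ^ (2:ℝ) := by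
          rw [ENNReal.mul_rpow_of_nonneg _ _ (by norm_num : (0:ℝ) ≤ 2),
            ← ENNReal.rpow_mul, ← ENNReal.rpow_mul]
          norm_num
  calc ∫⁻ p, (∫⁻ u, K (p - u) * G u) ^ (2:ℝ)
      ≤ ∫⁻ p, (∫⁻ x, K x) * ∫⁻ u, K (p - u) * G u ^ (2:ℝ) := lintegral_mono step1
    _ = (∫⁻ x, K x) * ∫⁻ p, ∫⁻ u, K (p - u) * G u ^ (2:ℝ) := lintegral_const_mul _ hconv2
    _ = (∫⁻ x, K x) * ∫⁻ u, ∫⁻ p, K (p - u) * G u ^ (2:ℝ) := by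
        rw [lintegral_lintegral_swap hKG2.aemeasurable]
    _ = (∫⁻ x, K x) * ∫⁻ u, (∫⁻ x, K x) * G u ^ (2:ℝ) := by
        congr 1
        refine lintegral_congr fun u => ?_
        have hKu : Measurable fun p : ℝ × ℝ => K (p - u) :=
          hK.comp (measurable_id.sub measurable_const)
        rw [lintegral_mul_const _ hKu,
          (measurePreserving_sub_right volume u).lintegral_comp hK, mul_comm]
    _ = ((∫⁻ x, K x) * (∫⁻ x, K x)) * ∫⁻ u, G u ^ (2:ℝ) := by
        rw [lintegral_const_mul _ hGsq, mul_assoc]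

lemma bilin_lt_top (hK : Measurable K) (hF : Measurable F) (hG : Measurable G)
    (hKf : ∫⁻ x, K x ≠ ⊤) (hF2 : ∫⁻ x, F x ^ (2:ℝ) ≠ ⊤) (hG2 : ∫⁻ x, G x ^ (2:ℝ) ≠ ⊤) :
    ∫⁻ p, F p * ∫⁻ u, K (p - u) * G u < ⊤ := by
  have hKG : Measurable (Function.uncurry fun p u : ℝ × ℝ => K (p - u) * G u) :=
    (hK.comp (measurable_fst.sub measurable_snd)).mul (hG.comp measurable_snd)
  have hconv : Measurable fun p : ℝ × ℝ => ∫⁻ u, K (p - u) * G u := hKG.lintegral_prod_right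
  have hcs := lint_CS volume hF.aemeasurable hconv.aemeasurable
  have hbound := conv_sq_bound hK hG
  calc ∫⁻ p, F p * ∫⁻ u, K (p - u) * G u
      ≤ (∫⁻ x, F x ^ (2:ℝ)) ^ (1/2:ℝ)
          * (∫⁻ p, (∫⁻ u, K (p - u) * G u) ^ (2:ℝ)) ^ (1/2:ℝ) := hcs
    _ ≤ (∫⁻ x, F x ^ (2:ℝ)) ^ (1/2:ℝ)
          * ((((∫⁻ x, K x) * (∫⁻ x, K x)) * ∫⁻ u, G u ^ (2:ℝ)) ^ (1/2:ℝ)) :=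
        mul_le_mul_right (ENNReal.rpow_le_rpow hbound (by norm_num)) _
    _ < ⊤ := by
        refine ENNReal.mul_lt_top (ENNReal.rpow_lt_top_of_nonneg (by norm_num) hF2)
          (ENNReal.rpow_lt_top_of_nonneg (by norm_num) ?_)
        exact ENNReal.mul_ne_top (ENNReal.mul_ne_top hKf hKf) hG2


lemma memL2_sq_lt_top {h : ℝ × ℝ → ℝ} (hh : MemLp h 2 volume) :
    ∫⁻ x, (‖h x‖₊ : ℝ≥0∞) ^ (2:ℝ) < ⊤ := by
  have := lintegral_rpow_enorm_lt_top_of_eLpNorm_lt_top (p := 2) (μ := volume) (f := h)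
    (by norm_num) (by norm_num) hh.2
  simpa [enorm_eq_nnnorm] using this

lemma conv_memL2 {κ g : ℝ × ℝ → ℝ} (hκm : Measurable κ) (hκi : Integrable κ volume)
    (hgm : StronglyMeasurable g) (hg : MemLp g 2 volume) (c : ℝ) :
    MemLp (fun p : ℝ × ℝ => c * ∫ u, κ (p - u) * g u) 2 volume := by
  have hKm : Measurable fun x : ℝ × ℝ => (‖κ x‖₊ : ℝ≥0∞) := hκm.nnnorm.coe_nnreal_ennreal
  have hGm : Measurable fun x : ℝ × ℝ => (‖g x‖₊ : ℝ≥0∞) :=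
    hgm.measurable.nnnorm.coe_nnreal_ennreal
  have hA : ∫⁻ x, (‖κ x‖₊ : ℝ≥0∞) ≠ ⊤ := hκi.2.ne
  have hG2 : ∫⁻ x, (‖g x‖₊ : ℝ≥0∞) ^ (2:ℝ) ≠ ⊤ := (memL2_sq_lt_top hg).ne
  constructor
  · exact (((hκm.comp (measurable_fst.sub measurable_snd)).stronglyMeasurable.mul
      (hgm.comp_measurable measurable_snd)).integral_prod_right'.const_mul c).aestronglyMeasurable
  · rw [eLpNorm_lt_top_iff_lintegral_rpow_enorm_lt_top (by norm_num) (by norm_num)]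
    have key : ∀ p : ℝ × ℝ, (‖c * ∫ u, κ (p - u) * g u‖₊ : ℝ≥0∞) ^ (2:ℝ≥0∞).toReal
        ≤ (‖c‖₊ : ℝ≥0∞) ^ (2:ℝ)
          * (∫⁻ u, (‖κ (p - u)‖₊ : ℝ≥0∞) * (‖g u‖₊ : ℝ≥0∞)) ^ (2:ℝ) := by
      intro p
      have h1 : (‖c * ∫ u, κ (p - u) * g u‖₊ : ℝ≥0∞)
          ≤ (‖c‖₊ : ℝ≥0∞) * ∫⁻ u, (‖κ (p - u)‖₊ : ℝ≥0∞) * (‖g u‖₊ : ℝ≥0∞) := by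
        rw [nnnorm_mul, ENNReal.coe_mul]
        refine mul_le_mul_right ?_ _
        refine (enorm_integral_le_lintegral_enorm _).trans_eq ?_
        refine lintegral_congr fun u => ?_
        rw [enorm_eq_nnnorm, nnnorm_mul, ENNReal.coe_mul]
      have h2 : (2:ℝ≥0∞).toReal = (2:ℝ) := by norm_num
      rw [h2, ← ENNReal.mul_rpow_of_nonneg _ _ (by norm_num : (0:ℝ) ≤ 2)]
      exact ENNReal.rpow_le_rpow h1 (by norm_num)
    refine lt_of_le_of_lt (lintegral_mono key) ?_
    have hmeas : Measurable fun p : ℝ × ℝ =>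
        (∫⁻ u, (‖κ (p - u)‖₊ : ℝ≥0∞) * (‖g u‖₊ : ℝ≥0∞)) ^ (2:ℝ) := by
      refine Measurable.pow_const ?_ _
      have hKGm : Measurable (Function.uncurry fun p u : ℝ × ℝ =>
          (‖κ (p - u)‖₊ : ℝ≥0∞) * (‖g u‖₊ : ℝ≥0∞)) :=
        (hKm.comp (measurable_fst.sub measurable_snd)).mul (hGm.comp measurable_snd)
      exact hKGm.lintegral_prod_right
    rw [lintegral_const_mul _ hmeas]
    refine ENNReal.mul_lt_top ?_ ?_
    · exact ENNReal.rpow_lt_top_of_nonneg (by norm_num) ENNReal.coe_ne_top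
    · exact lt_of_le_of_lt (conv_sq_bound hKm hGm)
        (ENNReal.mul_lt_top (ENNReal.mul_lt_top hA.lt_top hA.lt_top) hG2.lt_top)


noncomputable def ker (a1 a2 l1 l2 : ℝ) : ℝ × ℝ → ℝ :=
  fun x => tk (a1 - 1) l1 x.1 * tk (a2 - 1) l2 x.2

lemma ker_measurable (a1 a2 l1 l2 : ℝ) : Measurable (ker a1 a2 l1 l2) :=
  ((tk_measurable _ _).comp measurable_fst).mul ((tk_measurable _ _).comp measurable_snd)

lemma ker_integrable {a1 a2 l1 l2 : ℝ} (ha1 : 0 < a1) (ha2 : 0 < a2)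
    (hl1 : 0 < l1) (hl2 : 0 < l2) : Integrable (ker a1 a2 l1 l2) volume := by
  unfold ker
  rw [Measure.volume_eq_prod ℝ ℝ]
  exact (tk_integrable (by linarith) hl1).mul_prod (tk_integrable (by linarith) hl2)

lemma ker_neg_integrable {a1 a2 l1 l2 : ℝ} (ha1 : 0 < a1) (ha2 : 0 < a2)
    (hl1 : 0 < l1) (hl2 : 0 < l2) :
    Integrable (fun x : ℝ × ℝ => ker a1 a2 l1 l2 (-x)) volume := by
  have h := (Measure.measurePreserving_neg (volume : Measure (ℝ × ℝ))).integrable_comp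
    (ker_integrable ha1 ha2 hl1 hl2).1
  exact h.mpr (ker_integrable ha1 ha2 hl1 hl2)

lemma prod_integrable {κ f g : ℝ × ℝ → ℝ} (hκm : Measurable κ) (hκi : Integrable κ volume)
    (hfm : StronglyMeasurable f) (hgm : StronglyMeasurable g)
    (hf : MemLp f 2 volume) (hg : MemLp g 2 volume) :
    Integrable (fun z : (ℝ × ℝ) × (ℝ × ℝ) => f z.1 * (κ (z.1 - z.2) * g z.2))
      (volume.prod volume) := by
  have hHm : StronglyMeasurable fun z : (ℝ × ℝ) × (ℝ × ℝ) =>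
      f z.1 * (κ (z.1 - z.2) * g z.2) :=
    (hfm.comp_measurable measurable_fst).mul
      ((hκm.comp (measurable_fst.sub measurable_snd)).stronglyMeasurable.mul
        (hgm.comp_measurable measurable_snd))
  refine ⟨hHm.aestronglyMeasurable, ?_⟩
  have hKm : Measurable fun x : ℝ × ℝ => (‖κ x‖₊ : ℝ≥0∞) := hκm.nnnorm.coe_nnreal_ennreal
  have hFm : Measurable fun x : ℝ × ℝ => (‖f x‖₊ : ℝ≥0∞) :=
    hfm.measurable.nnnorm.coe_nnreal_ennreal
  have hGm : Measurable fun x : ℝ × ℝ => (‖g x‖₊ : ℝ≥0∞) :=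
    hgm.measurable.nnnorm.coe_nnreal_ennreal
  show (∫⁻ z, (‖f z.1 * (κ (z.1 - z.2) * g z.2)‖₊ : ℝ≥0∞) ∂(volume.prod volume)) < ⊤
  have hmeas : AEMeasurable (fun z : (ℝ × ℝ) × (ℝ × ℝ) =>
      (‖f z.1 * (κ (z.1 - z.2) * g z.2)‖₊ : ℝ≥0∞)) (volume.prod volume) :=
    hHm.measurable.nnnorm.coe_nnreal_ennreal.aemeasurable
  rw [lintegral_prod _ hmeas]
  have heq : ∀ p : ℝ × ℝ, ∫⁻ u, (‖f p * (κ (p - u) * g u)‖₊ : ℝ≥0∞)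
      = (‖f p‖₊ : ℝ≥0∞) * ∫⁻ u, (‖κ (p - u)‖₊ : ℝ≥0∞) * (‖g u‖₊ : ℝ≥0∞) := by
    intro p
    have hin : Measurable fun u : ℝ × ℝ => (‖κ (p - u)‖₊ : ℝ≥0∞) * (‖g u‖₊ : ℝ≥0∞) :=
      (hKm.comp (measurable_const.sub measurable_id)).mul hGm
    rw [← lintegral_const_mul _ hin]
    refine lintegral_congr fun u => ?_
    simp [nnnorm_mul]
  calc ∫⁻ p, ∫⁻ u, (‖f p * (κ (p - u) * g u)‖₊ : ℝ≥0∞)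
      = ∫⁻ p, (‖f p‖₊ : ℝ≥0∞) * ∫⁻ u, (‖κ (p - u)‖₊ : ℝ≥0∞) * (‖g u‖₊ : ℝ≥0∞) :=
        lintegral_congr heq
    _ < ⊤ := bilin_lt_top hKm hFm hGm hκi.2.ne (memL2_sq_lt_top hf).ne (memL2_sq_lt_top hg).ne

lemma swap_eq {κ f g : ℝ × ℝ → ℝ} (hκm : Measurable κ) (hκi : Integrable κ volume)
    (hfm : StronglyMeasurable f) (hgm : StronglyMeasurable g)
    (hf : MemLp f 2 volume) (hg : MemLp g 2 volume) (c : ℝ) :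
    ∫ p : ℝ × ℝ, f p * (c * ∫ u, κ (p - u) * g u)
      = ∫ u : ℝ × ℝ, (c * ∫ p, κ (p - u) * f p) * g u := by
  have HInt := prod_integrable hκm hκi hfm hgm hf hg
  have h1 : ∀ p : ℝ × ℝ, f p * (c * ∫ u, κ (p - u) * g u)
      = c * ∫ u, f p * (κ (p - u) * g u) := by
    intro p
    rw [integral_const_mul]
    ring
  have h2 : ∀ u : ℝ × ℝ, (c * ∫ p, κ (p - u) * f p) * g u
      = c * ∫ p, f p * (κ (p - u) * g u) := by
    intro u
    calc (c * ∫ p, κ (p - u) * f p) * g u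
        = c * ((∫ p, κ (p - u) * f p) * g u) := by ring
      _ = c * ∫ p, κ (p - u) * f p * g u := by rw [integral_mul_const]
      _ = c * ∫ p, f p * (κ (p - u) * g u) := by
          congr 1
          exact integral_congr_ae (Filter.Eventually.of_forall fun p => by ring)
  simp_rw [h1, h2]
  rw [integral_const_mul, integral_const_mul]
  congr 1
  exact integral_integral_swap (f := fun p u => f p * (κ (p - u) * g u)) HInt


lemma Ip_eq (a1 a2 l1 l2 : ℝ) (g : ℝ × ℝ → ℝ) :
    (fun p : ℝ × ℝ => Ip a1 a2 l1 l2 g p.1 p.2)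
      = fun p : ℝ × ℝ => (Real.Gamma a1 * Real.Gamma a2)⁻¹
          * ∫ u, ker a1 a2 l1 l2 (p - u) * g u := rfl

lemma Im_eq (a1 a2 l1 l2 : ℝ) (f : ℝ × ℝ → ℝ) :
    (fun q : ℝ × ℝ => Im a1 a2 l1 l2 f q.1 q.2)
      = fun q : ℝ × ℝ => (Real.Gamma a1 * Real.Gamma a2)⁻¹
          * ∫ p, ker a1 a2 l1 l2 (p - q) * f p := rfl

lemma Im_eq' (a1 a2 l1 l2 : ℝ) (f : ℝ × ℝ → ℝ) :
    (fun q : ℝ × ℝ => Im a1 a2 l1 l2 f q.1 q.2)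
      = fun q : ℝ × ℝ => (Real.Gamma a1 * Real.Gamma a2)⁻¹
          * ∫ p, (fun x => ker a1 a2 l1 l2 (-x)) (q - p) * f p := by
  rw [Im_eq]
  funext q
  congr 1
  exact integral_congr_ae (Filter.Eventually.of_forall fun p => by simp [neg_sub])

theorem main' (a1 a2 l1 l2 : ℝ)
    (ha1 : 0 < a1) (ha2 : 0 < a2) (hl1 : 0 < l1) (hl2 : 0 < l2)
    (f g : ℝ × ℝ → ℝ) (hfm : StronglyMeasurable f) (hgm : StronglyMeasurable g)
    (hf : MemLp f 2 (volume : Measure (ℝ × ℝ)))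
    (hg : MemLp g 2 (volume : Measure (ℝ × ℝ))) :
    MemLp (fun p : ℝ × ℝ => Ip a1 a2 l1 l2 g p.1 p.2) 2 (volume : Measure (ℝ × ℝ)) ∧
    MemLp (fun p : ℝ × ℝ => Im a1 a2 l1 l2 f p.1 p.2) 2 (volume : Measure (ℝ × ℝ)) ∧
    Integrable (fun p : ℝ × ℝ => f p * Ip a1 a2 l1 l2 g p.1 p.2) ∧
    Integrable (fun p : ℝ × ℝ => Im a1 a2 l1 l2 f p.1 p.2 * g p) ∧
    ∫ p : ℝ × ℝ, f p * Ip a1 a2 l1 l2 g p.1 p.2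
      = ∫ p : ℝ × ℝ, Im a1 a2 l1 l2 f p.1 p.2 * g p := by
  set c : ℝ := (Real.Gamma a1 * Real.Gamma a2)⁻¹ with hc
  have hκm := ker_measurable a1 a2 l1 l2
  have hκi := ker_integrable ha1 ha2 hl1 hl2
  have hκ'm : Measurable fun x : ℝ × ℝ => ker a1 a2 l1 l2 (-x) :=
    hκm.comp measurable_neg
  have hκ'i := ker_neg_integrable ha1 ha2 hl1 hl2
  have hIp : MemLp (fun p : ℝ × ℝ => Ip a1 a2 l1 l2 g p.1 p.2) 2 volume := by
    rw [Ip_eq]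
    exact conv_memL2 hκm hκi hgm hg c
  have hIm : MemLp (fun p : ℝ × ℝ => Im a1 a2 l1 l2 f p.1 p.2) 2 volume := by
    rw [Im_eq']
    exact conv_memL2 hκ'm hκ'i hfm hf c
  have h3 : Integrable (fun p : ℝ × ℝ => f p * Ip a1 a2 l1 l2 g p.1 p.2) := by
    have hs : MemLp (f • fun p : ℝ × ℝ => Ip a1 a2 l1 l2 g p.1 p.2) 1 volume :=
      hIp.smul hf
    have heq : (fun p : ℝ × ℝ => f p * Ip a1 a2 l1 l2 g p.1 p.2)
        = f • fun p : ℝ × ℝ => Ip a1 a2 l1 l2 g p.1 p.2 := funext fun _ => rfl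
    rw [heq]
    exact memLp_one_iff_integrable.mp hs
  have h4 : Integrable (fun p : ℝ × ℝ => Im a1 a2 l1 l2 f p.1 p.2 * g p) := by
    have hs : MemLp ((fun p : ℝ × ℝ => Im a1 a2 l1 l2 f p.1 p.2) • g) 1 volume :=
      hg.smul hIm
    have heq : (fun p : ℝ × ℝ => Im a1 a2 l1 l2 f p.1 p.2 * g p)
        = (fun p : ℝ × ℝ => Im a1 a2 l1 l2 f p.1 p.2) • g := funext fun _ => rfl
    rw [heq]
    exact memLp_one_iff_integrable.mp hs
  refine ⟨hIp, hIm, h3, h4, ?_⟩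
  have := swap_eq hκm hκi hfm hgm hf hg c
  calc ∫ p : ℝ × ℝ, f p * Ip a1 a2 l1 l2 g p.1 p.2
      = ∫ p : ℝ × ℝ, f p * (c * ∫ u, ker a1 a2 l1 l2 (p - u) * g u) := rfl
    _ = ∫ u : ℝ × ℝ, (c * ∫ p, ker a1 a2 l1 l2 (p - u) * f p) * g u := this
    _ = ∫ p : ℝ × ℝ, Im a1 a2 l1 l2 f p.1 p.2 * g p := rfl


end TFIBP

open TFIBP in
/-- two-parameter tempered fractional integration by parts: for
`f, g ∈ L²(ℝ²)`, `𝕀₊^{α,λ}g` and `𝕀₋^{α,λ}f` are again in `L²(ℝ²)`, both sides are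
absolutely convergent, and `∫ f · 𝕀₊^{α,λ}g = ∫ 𝕀₋^{α,λ}f · g`. -/
theorem tempered_fractional_integration_by_parts (a1 a2 l1 l2 : ℝ)
    (ha1 : 0 < a1) (ha2 : 0 < a2) (hl1 : 0 < l1) (hl2 : 0 < l2)
    (f g : ℝ × ℝ → ℝ) (hf : MemLp f 2 (volume : Measure (ℝ × ℝ)))
    (hg : MemLp g 2 (volume : Measure (ℝ × ℝ))) :
    MemLp (fun p : ℝ × ℝ => Ip a1 a2 l1 l2 g p.1 p.2) 2 (volume : Measure (ℝ × ℝ)) ∧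
    MemLp (fun p : ℝ × ℝ => Im a1 a2 l1 l2 f p.1 p.2) 2 (volume : Measure (ℝ × ℝ)) ∧
    Integrable (fun p : ℝ × ℝ => f p * Ip a1 a2 l1 l2 g p.1 p.2) ∧
    Integrable (fun p : ℝ × ℝ => Im a1 a2 l1 l2 f p.1 p.2 * g p) ∧
    ∫ p : ℝ × ℝ, f p * Ip a1 a2 l1 l2 g p.1 p.2
      = ∫ p : ℝ × ℝ, Im a1 a2 l1 l2 f p.1 p.2 * g p := by
  set f' := hf.1.mk f with hf'def
  set g' := hg.1.mk g with hg'def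
  have hff' : f =ᵐ[volume] f' := hf.1.ae_eq_mk
  have hgg' : g =ᵐ[volume] g' := hg.1.ae_eq_mk
  have hf'm : StronglyMeasurable f' := hf.1.stronglyMeasurable_mk
  have hg'm : StronglyMeasurable g' := hg.1.stronglyMeasurable_mk
  have hf' : MemLp f' 2 volume := hf.ae_eq hff'
  have hg' : MemLp g' 2 volume := hg.ae_eq hgg'
  have hIpg : ∀ t s : ℝ, Ip a1 a2 l1 l2 g t s = Ip a1 a2 l1 l2 g' t s := by
    intro t s
    unfold Ip
    congr 1
    exact integral_congr_ae (hgg'.mono fun u hu => by simp only [hu])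
  have hImf : ∀ t s : ℝ, Im a1 a2 l1 l2 f t s = Im a1 a2 l1 l2 f' t s := by
    intro t s
    unfold Im
    congr 1
    exact integral_congr_ae (hff'.mono fun u hu => by simp only [hu])
  obtain ⟨m1, m2, m3, m4, m5⟩ := main' a1 a2 l1 l2 ha1 ha2 hl1 hl2 f' g' hf'm hg'm hf' hg'
  refine ⟨?_, ?_, ?_, ?_, ?_⟩
  · rw [show (fun p : ℝ × ℝ => Ip a1 a2 l1 l2 g p.1 p.2)
        = fun p : ℝ × ℝ => Ip a1 a2 l1 l2 g' p.1 p.2 from funext fun p => hIpg p.1 p.2]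
    exact m1
  · rw [show (fun p : ℝ × ℝ => Im a1 a2 l1 l2 f p.1 p.2)
        = fun p : ℝ × ℝ => Im a1 a2 l1 l2 f' p.1 p.2 from funext fun p => hImf p.1 p.2]
    exact m2
  · exact m3.congr (Filter.EventuallyEq.symm (hff'.mono fun p hp => by simp only [hp, hIpg p.1 p.2]))
  · exact m4.congr (Filter.EventuallyEq.symm (hgg'.mono fun p hp => by simp only [hp, hImf p.1 p.2]))
  · calc ∫ p : ℝ × ℝ, f p * Ip a1 a2 l1 l2 g p.1 p.2
        = ∫ p : ℝ × ℝ, f' p * Ip a1 a2 l1 l2 g' p.1 p.2 :=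
          integral_congr_ae (hff'.mono fun p hp => by simp only [hp, hIpg p.1 p.2])
      _ = ∫ p : ℝ × ℝ, Im a1 a2 l1 l2 f' p.1 p.2 * g' p := m5
      _ = ∫ p : ℝ × ℝ, Im a1 a2 l1 l2 f p.1 p.2 * g p :=
          (integral_congr_ae (hgg'.mono fun p hp => by simp only [hp, hImf p.1 p.2])).symm
end
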